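/- arXiv:2506.09966 — 5 statements merged into one kernel-verified Lean document; each statement's English description precedes it below -/
import Mathlib

section
/- Let (A, ≤) be a partially ordered set and R ⊆ A × A a relation that is convex with respect to ≤. Then t(R) = t_r(R) ∩ t_ℓ(R), where t, t_r and t_ℓ denote the tightening, right-tightening and left-tightening operators (both sides of the relation ordered by ≤). -/
/-- The tightening of a relation `R ⊆ A × B`: the pairs `(a, b) ∈ R` such that
moving down from `a` and/or up from `b` while staying in `R` forces equality. -/
def tighten {A B : Type*} [PartialOrder A] [PartialOrder B]
    (R : Set (A × B)) : Set (A × B) :=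
  {p | p ∈ R ∧ ∀ a' b', a' ≤ p.1 → p.2 ≤ b' → (a', b') ∈ R → a' = p.1 ∧ b' = p.2}

/-- The right-tightening of a relation `R ⊆ A × B`: the pairs `(a, b) ∈ R` with
`b` maximal among the elements related to `a`. -/
def tightenR {A B : Type*} [PartialOrder A] [PartialOrder B]
    (R : Set (A × B)) : Set (A × B) :=
  {p | p ∈ R ∧ ∀ b', p.2 ≤ b' → (p.1, b') ∈ R → b' = p.2}

/-- The left-tightening of a relation `R ⊆ A × B`: the pairs `(a, b) ∈ R` with
`a` minimal among the elements related to `b`. -/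
def tightenL {A B : Type*} [PartialOrder A] [PartialOrder B]
    (R : Set (A × B)) : Set (A × B) :=
  {p | p ∈ R ∧ ∀ a', a' ≤ p.1 → (a', p.2) ∈ R → a' = p.1}

/-- A relation `R ⊆ A × A` is convex with respect to the partial order on `A`
if `(a, b) ∈ R` implies `a ≤ b`, and whenever `a ≤ b ≤ c` and `(a, c) ∈ R`,
then `(a, b) ∈ R` and `(b, c) ∈ R`. -/
def ConvexRel {A : Type*} [PartialOrder A] (R : Set (A × A)) : Prop :=
  (∀ p ∈ R, p.1 ≤ p.2) ∧
  ∀ a b c : A, a ≤ b → b ≤ c → (a, c) ∈ R → (a, b) ∈ R ∧ (b, c) ∈ R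

/-- For a convex relation, the tightening equals the intersection of the
right- and left-tightenings. -/
theorem tighten_eq_inter_of_convex {A : Type*} [PartialOrder A]
    (R : Set (A × A)) (hR : ConvexRel R) :
    tighten R = tightenR R ∩ tightenL R := by
  ext ⟨a, b⟩
  constructor
  · rintro ⟨hmem, h⟩
    exact ⟨⟨hmem, fun b' hb hb' => (h a b' le_rfl hb hb').2⟩,
           ⟨hmem, fun a' ha ha' => (h a' b ha le_rfl ha').1⟩⟩
  · rintro ⟨⟨hmem, hr⟩, ⟨_, hl⟩⟩
    refine ⟨hmem, fun a' b' ha hb hab => ?_⟩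
    have hab' : a ≤ b' := le_trans (hR.1 _ hmem) hb
    obtain ⟨_, h2⟩ := hR.2 a' a b' ha hab' hab
    have hb' : b' = b := hr b' hb h2
    subst hb'
    exact ⟨hl a' ha hab, rfl⟩
end

section
/- Let (A, ≤) be a partially ordered set and R ⊆ A × A a relation that is convex with respect to ≤. Then t(R) = R if and only if t_ℓ(R) = R and t_r(R) = R, where t, t_r and t_ℓ denote the tightening, right-tightening and left-tightening operators. -/
/-- For a convex relation, R is tight iff it is both left-tight and
right-tight. -/
theorem tight_iff_lateral_of_convex {A : Type*} [PartialOrder A]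
    (R : Set (A × A)) (hR : ConvexRel R) :
    tighten R = R ↔ (tightenL R = R ∧ tightenR R = R) := by
  obtain ⟨hle, hconv⟩ := hR
  constructor
  · intro h
    constructor
    · ext p
      simp only [tightenL, Set.mem_setOf_eq]
      refine ⟨fun hp => hp.1, fun hp => ⟨hp, fun a' ha' ha'R => ?_⟩⟩
      have : p ∈ tighten R := h.symm ▸ hp
      exact (this.2 a' p.2 ha' le_rfl ha'R).1
    · ext p
      simp only [tightenR, Set.mem_setOf_eq]
      refine ⟨fun hp => hp.1, fun hp => ⟨hp, fun b' hb' hb'R => ?_⟩⟩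
      have : p ∈ tighten R := h.symm ▸ hp
      exact (this.2 p.1 b' le_rfl hb' hb'R).2
  · rintro ⟨hL, hypR⟩
    ext p
    simp only [tighten, Set.mem_setOf_eq]
    refine ⟨fun hp => hp.1, fun hp => ⟨hp, fun a' b' ha' hb' hab => ?_⟩⟩
    have h1 : a' ≤ p.2 := le_trans ha' (hle p hp)
    have h2 : (a', p.2) ∈ R := (hconv a' p.2 b' h1 hb' hab).1
    have hLp : p ∈ tightenL R := hL.symm ▸ hp
    have ea : a' = p.1 := hLp.2 a' ha' h2
    have hRp : p ∈ tightenR R := hypR.symm ▸ hp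
    have h3 : (p.1, b') ∈ R := ea ▸ hab
    exact ⟨ea, hRp.2 b' hb' h3⟩
end

section
/- Let (A, ≤) be a partially ordered set and R ⊆ A × A a relation that is convex with respect to ≤. Then t(R) = t_r(t_ℓ(R)), where t, t_r and t_ℓ denote the tightening, right-tightening and left-tightening operators. -/
/-- For a convex relation, the tightening can be computed by left-tightening
first and then right-tightening. -/
theorem tighten_eq_tightenR_tightenL_of_convex {A : Type*} [PartialOrder A]
    (R : Set (A × A)) (hR : ConvexRel R) :
    tighten R = tightenR (tightenL R) := by
  obtain ⟨hle, hconv⟩ := hR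
  ext ⟨a, b⟩
  constructor
  · rintro ⟨hab, ht⟩
    refine ⟨⟨hab, fun a' ha' h' => (ht a' b ha' le_rfl h').1⟩, ?_⟩
    intro b' hb' h'
    exact (ht a b' le_rfl hb' h'.1).2
  · rintro ⟨⟨hab, hL⟩, hRt⟩
    refine ⟨hab, fun a' b' ha' hb' h' => ?_⟩
    have hab' : a ≤ b := hle _ hab
    have ha'b : (a', b) ∈ R := (hconv a' b b' (ha'.trans hab') hb' h').1
    have haa : a' = a := hL a' ha' ha'b
    subst haa
    have hab'' : (a', b') ∈ R := h'
    have hmem : (a', b') ∈ tightenL R := by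
      refine ⟨hab'', fun a'' ha'' h'' => ?_⟩
      exact hL a'' ha'' (hconv a'' b b' (ha''.trans hab') hb' h'').1
    exact ⟨rfl, hRt b' hb' hmem⟩
end

section
/- Let G = (V, E, w) be a finite directed graph with vertex weights w : V → ℝ such that w(u) < w(v) for every edge (u, v) ∈ E, with edge costs d((u,v)) = w(v) − w(u), and let γ ≥ 0. Then a pair (u, v) ∈ V × V is the pair of endpoints of some tight path in G if and only if (u, v) ∈ t(R_{G,γ}), where the tightening t is taken with respect to the partial order on V given by the reflexive–transitive closure of E on both sides. -/
/-- The cost of a path, given edge costs `d`: the sum of the costs of its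
consecutive edges (0 for a path of length 1). -/
def pathCost {V : Type*} (d : V → V → ℝ) (p : List V) : ℝ :=
  ((p.zip p.tail).map fun e => d e.1 e.2).sum

/-- A path in the directed graph with edge relation `E`: a nonempty sequence of
vertices with consecutive pairs being edges. -/
def IsPath {V : Type*} (E : V → V → Prop) (p : List V) : Prop :=
  p ≠ [] ∧ p.Chain' E

/-- A tight path for threshold `γ`: a path of cost at most `γ` such that every
extension by one new edge at either end has cost strictly greater than `γ`. -/
def IsTight {V : Type*} (E : V → V → Prop) (d : V → V → ℝ) (γ : ℝ)
    (p : List V) : Prop :=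
  IsPath E p ∧ pathCost d p ≤ γ ∧
  (∀ u₀ a, p.head? = some a → E u₀ a → γ < pathCost d (u₀ :: p)) ∧
  (∀ uk b, p.getLast? = some b → E b uk → γ < pathCost d (p ++ [uk]))

/-- The relation `R_{G,γ}`: pairs `(u, v)` of vertices joined by a path from
`u` to `v` (i.e. `v` reachable from `u`) with `w v - w u ≤ γ`. -/
def RGgamma {V : Type*} (E : V → V → Prop) (w : V → ℝ) (γ : ℝ) :
    Set (V × V) :=
  {p | Relation.ReflTransGen E p.1 p.2 ∧ w p.2 - w p.1 ≤ γ}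

/-- The tightening of a relation `R ⊆ V × V` with respect to an order
relation `le` used on both sides. -/
def tightenRel {V : Type*} (le : V → V → Prop) (R : Set (V × V)) :
    Set (V × V) :=
  {p | p ∈ R ∧ ∀ a' b', le a' p.1 → le p.2 b' → (a', b') ∈ R →
    a' = p.1 ∧ b' = p.2}

lemma cost_eq' {V : Type*} (w : V → ℝ) :
    ∀ (p : List V) (u v : V), p.head? = some u → p.getLast? = some v →
      pathCost (fun a b => w b - w a) p = w v - w u := by
  intro p
  induction p with
  | nil => intro u v h; simp at h
  | cons a q ih =>
    intro u v hh hl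
    simp at hh
    subst hh
    cases q with
    | nil => simp at hl; subst hl; simp [pathCost]
    | cons b r =>
      have hl' : (b :: r).getLast? = some v := by
        rw [List.getLast?_cons_cons] at hl; exact hl
      have := ih b v rfl hl'
      simp [pathCost] at this ⊢
      linarith

lemma rtg_of_chain' {V : Type*} (E : V → V → Prop) :
    ∀ (p : List V) (u v : V), p.Chain' E → p.head? = some u →
      p.getLast? = some v → Relation.ReflTransGen E u v := by
  intro p
  induction p with
  | nil => intro u v _ h; simp at h
  | cons a q ih =>
    intro u v hc hh hl
    simp at hh; subst hh
    cases q with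
    | nil => simp at hl; subst hl; exact Relation.ReflTransGen.refl
    | cons b r =>
      rw [List.getLast?_cons_cons] at hl
      rw [List.Chain', List.isChain_cons_cons] at hc
      exact Relation.ReflTransGen.head hc.1 (ih b v hc.2 rfl hl)

lemma exists_path' {V : Type*} (E : V → V → Prop) {u v : V}
    (h : Relation.ReflTransGen E u v) :
    ∃ p : List V, p.Chain' E ∧ p.head? = some u ∧ p.getLast? = some v := by
  induction h using Relation.ReflTransGen.head_induction_on with
  | refl => exact ⟨[v], List.isChain_singleton _, by simp, by simp⟩
  | head hab _ ih =>
    obtain ⟨p, hc, hh, hl⟩ := ih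
    rename_i a c _
    refine ⟨a :: p, ?_, by simp, ?_⟩
    · rw [List.Chain', List.isChain_cons]
      exact ⟨fun y hy => by rw [hh] at hy; cases hy; exact hab, hc⟩
    · cases p with
      | nil => simp at hh
      | cons x xs => rw [List.getLast?_cons_cons]; exact hl

lemma w_mono' {V : Type*} {E : V → V → Prop} {w : V → ℝ}
    (hw : ∀ a b, E a b → w a < w b) {a b : V}
    (h : Relation.ReflTransGen E a b) : w a ≤ w b := by
  induction h with
  | refl => exact le_refl _
  | tail _ hbc ih => exact ih.trans (hw _ _ hbc).le

/-- The tight pairs of `G` (endpoints of tight paths) coincide with the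
tightening of `R_{G,γ}` with respect to the reachability order, the
reflexive-transitive closure of `E`, on both sides. -/
theorem tight_pairs_eq_tighten_RGgamma {V : Type*} [Fintype V]
    (E : V → V → Prop) (w : V → ℝ) (hw : ∀ a b, E a b → w a < w b)
    (γ : ℝ) (hγ : 0 ≤ γ) (u v : V) :
    (∃ p : List V, IsTight E (fun a b => w b - w a) γ p ∧
        p.head? = some u ∧ p.getLast? = some v) ↔
      (u, v) ∈ tightenRel (Relation.ReflTransGen E) (RGgamma E w γ) := by
  constructor
  · rintro ⟨p, ⟨⟨hne, hch⟩, hcost, hext1, hext2⟩, hh, hl⟩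
    have hpc := cost_eq' w p u v hh hl
    have hrtg := rtg_of_chain' E p u v hch hh hl
    refine ⟨⟨hrtg, by rw [hpc] at hcost; exact hcost⟩, ?_⟩
    rintro a' b' ha hb ⟨hr, hcb⟩
    have hva : w v ≤ w b' := w_mono' hw hb
    have hau : w a' ≤ w u := w_mono' hw ha
    constructor
    · by_contra hne'
      rcases ha.cases_tail with h | ⟨c, hac, hcu⟩
      · exact hne' h.symm
      have h1 := hext1 c u hh hcu
      have hlc : (c :: p).getLast? = some v := by
        cases p with
        | nil => simp at hh
        | cons x xs => rw [List.getLast?_cons_cons]; exact hl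
      rw [cost_eq' w (c :: p) c v (by simp) hlc] at h1
      have : w a' ≤ w c := w_mono' hw hac
      simp at hcb
      linarith
    · by_contra hne'
      rcases hb.cases_head with h | ⟨c, hvc, hcb'⟩
      · exact hne' h.symm
      have h2 := hext2 c v hl hvc
      have hhc : (p ++ [c]).head? = some u := by
        cases p with
        | nil => simp at hh
        | cons x xs => simpa using hh
      rw [cost_eq' w (p ++ [c]) u c hhc (by simp)] at h2
      have : w c ≤ w b' := w_mono' hw hcb'
      simp at hcb
      linarith
  · rintro ⟨⟨hrtg, hcost⟩, htight⟩
    obtain ⟨p, hc, hh, hl⟩ := exists_path' E hrtg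
    have hne : p ≠ [] := by intro h; subst h; simp at hh
    refine ⟨p, ⟨⟨hne, hc⟩, ?_, ?_, ?_⟩, hh, hl⟩
    · rw [cost_eq' w p u v hh hl]; exact hcost
    · intro u₀ a hha hEa
      rw [hh] at hha; cases hha
      have hlc : (u₀ :: p).getLast? = some v := by
        cases p with
        | nil => simp at hh
        | cons x xs => rw [List.getLast?_cons_cons]; exact hl
      rw [cost_eq' w (u₀ :: p) u₀ v (by simp) hlc]
      by_contra hle
      push_neg at hle
      have := htight u₀ v (Relation.ReflTransGen.single hEa)
        Relation.ReflTransGen.refl ⟨Relation.ReflTransGen.head hEa hrtg, hle⟩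
      exact absurd (this.1 ▸ hw u₀ u hEa) (lt_irrefl _)
    · intro uk b hlb hEb
      rw [hl] at hlb; cases hlb
      have hhc : (p ++ [uk]).head? = some u := by
        cases p with
        | nil => simp at hh
        | cons x xs => simpa using hh
      rw [cost_eq' w (p ++ [uk]) u uk hhc (by simp)]
      by_contra hle
      push_neg at hle
      have := htight u uk Relation.ReflTransGen.refl
        (Relation.ReflTransGen.single hEb) ⟨hrtg.tail hEb, hle⟩
      exact absurd (this.2 ▸ hw v uk hEb) (lt_irrefl _)
end

section
/- On the set A = {1, 2, 3, 4} with its standard (total) order, the relation R = {(1,2), (1,4), (2,3), (3,4)} satisfies: R is not convex; t(R) = {(1,4)}; t_r(R) = {(1,4), (2,3), (3,4)}; t_ℓ(R) = {(1,2), (1,4), (2,3)}; and hence t(R) ≠ t_r(R) ∩ t_ℓ(R) = {(1,4), (2,3)}. In particular, the identity t(R) = t_r(R) ∩ t_ℓ(R) fails for non-convex relations. -/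
/-- On {1, 2, 3, 4} with the usual order of natural numbers, the relation
R = {(1,2), (1,4), (2,3), (3,4)} is not convex; moreover t(R) = {(1,4)},
t_r(R) = {(1,4), (2,3), (3,4)}, t_ℓ(R) = {(1,2), (1,4), (2,3)}, and
t(R) ≠ t_r(R) ∩ t_ℓ(R) = {(1,4), (2,3)}: the identity
t(R) = t_r(R) ∩ t_ℓ(R) fails for non-convex relations. -/
theorem nonconvex_counterexample :
    let R : Set (ℕ × ℕ) := {(1, 2), (1, 4), (2, 3), (3, 4)}
    ¬ ConvexRel R ∧
    tighten R = {(1, 4)} ∧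
    tightenR R = {(1, 4), (2, 3), (3, 4)} ∧
    tightenL R = {(1, 2), (1, 4), (2, 3)} ∧
    tightenR R ∩ tightenL R = {(1, 4), (2, 3)} ∧
    tighten R ≠ tightenR R ∩ tightenL R := by
  intro R
  have hR : ∀ p : ℕ × ℕ, p ∈ R ↔ p = (1,2) ∨ p = (1,4) ∨ p = (2,3) ∨ p = (3,4) := by
    intro p; simp [R]
  have h2 : tighten R = {(1, 4)} := by
    ext ⟨a, b⟩
    simp only [tighten, R, Set.mem_insert_iff, Set.mem_singleton_iff, Set.mem_setOf_eq,
      Prod.mk.injEq, Prod.forall]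
    constructor
    · rintro ⟨h1, h2⟩
      rcases h1 with ⟨rfl,rfl⟩|⟨rfl,rfl⟩|⟨rfl,rfl⟩|⟨rfl,rfl⟩
      · have := h2 1 4 (le_refl _) (by norm_num) (by tauto); omega
      · tauto
      · have := h2 1 4 (by norm_num) (by norm_num) (by tauto); omega
      · have := h2 1 4 (by norm_num) (by norm_num) (by tauto); omega
    · rintro ⟨rfl, rfl⟩
      refine ⟨by tauto, ?_⟩
      intro a' b' ha hb h
      rcases h with ⟨rfl,rfl⟩|⟨rfl,rfl⟩|⟨rfl,rfl⟩|⟨rfl,rfl⟩ <;> omega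
  have h3 : tightenR R = {(1, 4), (2, 3), (3, 4)} := by
    ext ⟨a, b⟩
    simp only [tightenR, R, Set.mem_insert_iff, Set.mem_singleton_iff, Set.mem_setOf_eq,
      Prod.mk.injEq]
    constructor
    · rintro ⟨h1, h2⟩
      rcases h1 with ⟨rfl,rfl⟩|⟨rfl,rfl⟩|⟨rfl,rfl⟩|⟨rfl,rfl⟩
      · have := h2 4 (by norm_num) (by tauto); omega
      · tauto
      · tauto
      · tauto
    · rintro (⟨rfl,rfl⟩|⟨rfl,rfl⟩|⟨rfl,rfl⟩) <;>
      · refine ⟨by tauto, ?_⟩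
        intro b' hb h
        rcases h with h|h|h|h <;> simp_all
  have h4 : tightenL R = {(1, 2), (1, 4), (2, 3)} := by
    ext ⟨a, b⟩
    simp only [tightenL, R, Set.mem_insert_iff, Set.mem_singleton_iff, Set.mem_setOf_eq,
      Prod.mk.injEq]
    constructor
    · rintro ⟨h1, h2⟩
      rcases h1 with ⟨rfl,rfl⟩|⟨rfl,rfl⟩|⟨rfl,rfl⟩|⟨rfl,rfl⟩
      · tauto
      · tauto
      · tauto
      · have := h2 1 (by norm_num) (by tauto); omega
    · rintro (⟨rfl,rfl⟩|⟨rfl,rfl⟩|⟨rfl,rfl⟩) <;>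
      · refine ⟨by tauto, ?_⟩
        intro a' ha h
        rcases h with h|h|h|h <;> simp_all
  have h5 : tightenR R ∩ tightenL R = {(1, 4), (2, 3)} := by
    rw [h3, h4]
    ext ⟨a, b⟩
    simp only [Set.mem_inter_iff, Set.mem_insert_iff, Set.mem_singleton_iff, Prod.mk.injEq]
    omega
  refine ⟨?_, h2, h3, h4, h5, ?_⟩
  · rintro ⟨_, h⟩
    have := (h 1 3 4 (by norm_num) (by norm_num) (by tauto)).1
    simp [R] at this
  · rw [h2, h5]
    intro h
    have : (2, 3) ∈ ({(1, 4)} : Set (ℕ × ℕ)) := h ▸ (by simp)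
    simp at this
end
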